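/- arXiv:2404.08105 — 4 statements merged into one kernel-verified Lean document; each statement's English description precedes it below -/
import Mathlib

section
/- Basic Lasso inequalities for threshold regression (Lemma 1 of the appendix): Fix λ > 0 and 0 < μ < 1. Suppose the data satisfy Y_i = X_i'β0 + X_i'δ0·1{Q_i<τ0} + U_i for i = 1,…,n with α0 = (β0',δ0')' ∈ B and τ0 ∈ T; suppose (α̂, τ̂) ∈ B×T satisfies the minimizer property S_n(α̂,τ̂) + λ|D(τ̂)α̂|_1 ≤ S_n(α,τ) + λ|D(τ)α|_1 for all (α,τ) ∈ B×T; and suppose the noise condition NC(μ) holds: |n^{-1} Σ_{i=1}^n U_i X_i^{(j)}(τ)| ≤ (μλ/2)·||X^{(j)}(τ)||_n for every j ∈ {1,…,2p} and every τ ∈ T. Set J0 := J(α0), D̂ := D(τ̂), D := D(τ0), and R_n := (2/n) Σ_{i=1}^n U_i X_i'δ0·( 1{Q_i<τ̂} − 1{Q_i<τ0} ). Then: (i) ||f̂ − f0||_n² + (1−μ)·λ·|D̂(α̂−α0)|_1 ≤ 2λ·|[D̂(α̂−α0)]_{J0}|_1 + λ·| |D̂α0|_1 − |Dα0|_1 |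 + R_n; and (ii) ||f̂ − f0||_n² + (1−μ)·λ·|D̂(α̂−α0)|_1 ≤ 2λ·|[D̂(α̂−α0)]_{J0}|_1 + ||f_{(α0,τ̂)} − f0||_n². -/
open Finset

noncomputable section

variable {n p : ℕ}

/-- The indicator `1{Q_i < τ}` as a real number. -/
def ind01 {n : ℕ} (Q : Fin n → ℝ) (τ : ℝ) (i : Fin n) : ℝ :=
  if Q i < τ then 1 else 0

/-- The `j`-th column of the threshold design matrix `X(τ)`:
the first `p` columns are the plain columns of `X`, the last `p` columns are
the columns of `X` multiplied by the indicator `1{Q_i < τ}`. -/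
def tcol (X : Fin n → Fin p → ℝ) (Q : Fin n → ℝ) (τ : ℝ) (j : Fin p ⊕ Fin p)
    (i : Fin n) : ℝ :=
  Sum.elim (fun l => X i l) (fun l => if Q i < τ then X i l else 0) j

/-- Squared empirical norm `‖v‖ₙ² = n⁻¹ ∑ᵢ vᵢ²`. -/
def enorm2 (n : ℕ) (v : Fin n → ℝ) : ℝ := (n : ℝ)⁻¹ * ∑ i, v i ^ 2

/-- Empirical norm `‖v‖ₙ`. -/
def enormn (n : ℕ) (v : Fin n → ℝ) : ℝ := Real.sqrt (enorm2 n v)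

/-- Value of the regression function `f_(α,τ)` at the `i`-th observation. -/
def tfit (X : Fin n → Fin p → ℝ) (Q : Fin n → ℝ) (α : Fin p ⊕ Fin p → ℝ) (τ : ℝ)
    (i : Fin n) : ℝ :=
  ∑ j, tcol X Q τ j i * α j

/-- Least-squares criterion `S_n(α,τ)`. -/
def Sn (X : Fin n → Fin p → ℝ) (Q Y : Fin n → ℝ) (α : Fin p ⊕ Fin p → ℝ) (τ : ℝ) : ℝ :=
  enorm2 n (fun i => Y i - tfit X Q α τ i)

/-- Weighted ℓ¹ penalty `|D(τ)α|₁ = ∑ⱼ ‖X⁽ʲ⁾(τ)‖ₙ |αⱼ|`. -/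
def penD (X : Fin n → Fin p → ℝ) (Q : Fin n → ℝ) (α : Fin p ⊕ Fin p → ℝ) (τ : ℝ) : ℝ :=
  ∑ j, enormn n (tcol X Q τ j) * |α j|

/-- Support `J(α)` of a coefficient vector. -/
def suppA {p : ℕ} (α : Fin p ⊕ Fin p → ℝ) : Finset (Fin p ⊕ Fin p) :=
  Finset.univ.filter fun j => α j ≠ 0

/-- The Lasso minimizer property over `B × T`, with
`B = {α : |α|_∞ ≤ C1}` and `T = [t0, t1]`. -/
def MinimizerProp (X : Fin n → Fin p → ℝ) (Q Y : Fin n → ℝ) (C1 lam t0 t1 : ℝ)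
    (αh : Fin p ⊕ Fin p → ℝ) (τh : ℝ) : Prop :=
  ∀ α : Fin p ⊕ Fin p → ℝ, (∀ j, |α j| ≤ C1) → ∀ τ ∈ Set.Icc t0 t1,
    Sn X Q Y αh τh + lam * penD X Q αh τh ≤ Sn X Q Y α τ + lam * penD X Q α τ

/-- The noise condition NC(μ):
`|n⁻¹ ∑ᵢ Uᵢ Xᵢ⁽ʲ⁾(τ)| ≤ (μλ/2)‖X⁽ʲ⁾(τ)‖ₙ` for all `j ≤ 2p` and `τ ∈ T`. -/
def NoiseCond (X : Fin n → Fin p → ℝ) (Q U : Fin n → ℝ) (mu lam t0 t1 : ℝ) : Prop :=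
  ∀ j : Fin p ⊕ Fin p, ∀ τ ∈ Set.Icc t0 t1,
    |(n : ℝ)⁻¹ * ∑ i, U i * tcol X Q τ j i| ≤ mu * lam / 2 * enormn n (tcol X Q τ j)

-- Expansion of Sn around the truth
lemma sn_expand (X : Fin n → Fin p → ℝ) (Q U Y : Fin n → ℝ)
    (α0 : Fin p ⊕ Fin p → ℝ) (τ0 : ℝ)
    (hdata : ∀ i, Y i = tfit X Q α0 τ0 i + U i)
    (α : Fin p ⊕ Fin p → ℝ) (τ : ℝ) :
    Sn X Q Y α τ = enorm2 n U
      - 2 * ((n : ℝ)⁻¹ * ∑ i, U i * (tfit X Q α τ i - tfit X Q α0 τ0 i))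
      + enorm2 n (fun i => tfit X Q α τ i - tfit X Q α0 τ0 i) := by
  unfold Sn enorm2
  have h : ∀ i : Fin n, (Y i - tfit X Q α τ i) ^ 2
      = U i ^ 2 - 2 * (U i * (tfit X Q α τ i - tfit X Q α0 τ0 i))
        + (tfit X Q α τ i - tfit X Q α0 τ0 i) ^ 2 := by
    intro i; rw [hdata i]; ring
  rw [Finset.sum_congr rfl fun i _ => h i]
  rw [Finset.sum_add_distrib, Finset.sum_sub_distrib, ← Finset.mul_sum]
  ring

lemma tfit_sub (X : Fin n → Fin p → ℝ) (Q : Fin n → ℝ)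
    (α β : Fin p ⊕ Fin p → ℝ) (τ : ℝ) (i : Fin n) :
    tfit X Q α τ i - tfit X Q β τ i = ∑ j, tcol X Q τ j i * (α j - β j) := by
  unfold tfit
  rw [← Finset.sum_sub_distrib]
  exact Finset.sum_congr rfl fun j _ => by ring

lemma inner_lin (U : Fin n → ℝ) (w : Fin p ⊕ Fin p → Fin n → ℝ)
    (c : Fin p ⊕ Fin p → ℝ) :
    (n : ℝ)⁻¹ * ∑ i, U i * ∑ j, w j i * c j
      = ∑ j, c j * ((n : ℝ)⁻¹ * ∑ i, U i * w j i) := by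
  rw [Finset.sum_congr rfl fun i _ => (Finset.mul_sum _ _ _ : U i * ∑ j, w j i * c j = _)]
  rw [Finset.sum_comm]
  rw [Finset.mul_sum]
  refine Finset.sum_congr rfl fun j _ => ?_
  rw [Finset.mul_sum, Finset.mul_sum, Finset.mul_sum]
  exact Finset.sum_congr rfl fun i _ => by ring
  
-- difference of fits at same α
lemma tfit_tau_diff (X : Fin n → Fin p → ℝ) (Q : Fin n → ℝ)
    (α0 : Fin p ⊕ Fin p → ℝ) (τh τ0 : ℝ) (i : Fin n) :
    tfit X Q α0 τh i - tfit X Q α0 τ0 i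
      = (∑ l : Fin p, X i l * α0 (Sum.inr l)) * (ind01 Q τh i - ind01 Q τ0 i) := by
  unfold tfit tcol ind01
  rw [Fintype.sum_sum_type, Fintype.sum_sum_type]
  simp only [Sum.elim_inl, Sum.elim_inr]
  have h : ∀ τ l, (if Q i < τ then X i l else 0) * α0 (Sum.inr l)
      = X i l * α0 (Sum.inr l) * (if Q i < τ then (1:ℝ) else 0) := by
    intro τ l; split <;> ring
  rw [Finset.sum_congr rfl fun l _ => h τh l, Finset.sum_congr rfl fun l _ => h τ0 l]
  rw [← Finset.sum_mul, ← Finset.sum_mul]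
  ring

-- Penalty comparison on the support
lemma pen_key {p : ℕ} (w : Fin p ⊕ Fin p → ℝ) (hw : ∀ j, 0 ≤ w j)
    (α0 αhat : Fin p ⊕ Fin p → ℝ) :
    (∑ j, w j * |α0 j|) + (∑ j, w j * |αhat j - α0 j|) - ∑ j, w j * |αhat j|
      ≤ 2 * ∑ j ∈ suppA α0, w j * |αhat j - α0 j| := by
  have hr : 2 * ∑ j ∈ suppA α0, w j * |αhat j - α0 j|
      = ∑ j : Fin p ⊕ Fin p, if α0 j ≠ 0 then 2 * (w j * |αhat j - α0 j|) else 0 := by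
    rw [suppA, Finset.sum_filter, Finset.mul_sum]
    exact Finset.sum_congr rfl fun j _ => by split <;> ring
  rw [hr, ← Finset.sum_add_distrib, ← Finset.sum_sub_distrib]
  refine Finset.sum_le_sum fun j _ => ?_
  by_cases h : α0 j = 0
  · simp [h]
  · rw [if_pos h]
    have h1 : |α0 j| - |αhat j| ≤ |αhat j - α0 j| := by
      have := abs_sub_abs_le_abs_sub (α0 j) (αhat j)
      rw [abs_sub_comm] at this; linarith
    have h2 : w j * |α0 j| - w j * |αhat j| ≤ w j * |αhat j - α0 j| := by
      rw [← mul_sub]; exact mul_le_mul_of_nonneg_left h1 (hw j)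
    linarith

theorem stmt5' {n p : ℕ} (X : Fin n → Fin p → ℝ) (Q U Y : Fin n → ℝ)
    (α0 αhat : Fin p ⊕ Fin p → ℝ) (τ0 τhat t0 t1 lam mu C1 : ℝ)
    (hlam : 0 < lam) (hmu0 : 0 < mu) (hmu1 : mu < 1)
    (hdata : ∀ i, Y i = tfit X Q α0 τ0 i + U i)
    (hα0B : ∀ j, |α0 j| ≤ C1) (hτ0 : τ0 ∈ Set.Icc t0 t1)
    (hαhB : ∀ j, |αhat j| ≤ C1) (hτh : τhat ∈ Set.Icc t0 t1)
    (hmin : ∀ α : Fin p ⊕ Fin p → ℝ, (∀ j, |α j| ≤ C1) → ∀ τ ∈ Set.Icc t0 t1,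
      Sn X Q Y αhat τhat + lam * penD X Q αhat τhat ≤ Sn X Q Y α τ + lam * penD X Q α τ)
    (hNC : ∀ j : Fin p ⊕ Fin p, ∀ τ ∈ Set.Icc t0 t1,
      |(n : ℝ)⁻¹ * ∑ i, U i * tcol X Q τ j i| ≤ mu * lam / 2 * enormn n (tcol X Q τ j)) :
    (enorm2 n (fun i => tfit X Q αhat τhat i - tfit X Q α0 τ0 i) +
        (1 - mu) * lam * ∑ j, enormn n (tcol X Q τhat j) * |αhat j - α0 j| ≤
      2 * lam * (∑ j ∈ suppA α0, enormn n (tcol X Q τhat j) * |αhat j - α0 j|) +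
        lam * |penD X Q α0 τhat - penD X Q α0 τ0| +
        2 / (n : ℝ) * ∑ i, U i * (∑ l : Fin p, X i l * α0 (Sum.inr l)) *
          (ind01 Q τhat i - ind01 Q τ0 i)) ∧
    (enorm2 n (fun i => tfit X Q αhat τhat i - tfit X Q α0 τ0 i) +
        (1 - mu) * lam * ∑ j, enormn n (tcol X Q τhat j) * |αhat j - α0 j| ≤
      2 * lam * (∑ j ∈ suppA α0, enormn n (tcol X Q τhat j) * |αhat j - α0 j|) +
        enorm2 n (fun i => tfit X Q α0 τhat i - tfit X Q α0 τ0 i)) := by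
  classical
  -- abbreviations
  set w : Fin p ⊕ Fin p → ℝ := fun j => enormn n (tcol X Q τhat j) with hw_def
  have hw : ∀ j, 0 ≤ w j := fun j => Real.sqrt_nonneg _
  set ip : Fin p ⊕ Fin p → ℝ := fun j => (n : ℝ)⁻¹ * ∑ i, U i * tcol X Q τhat j i with hip_def
  set S : ℝ := ∑ j, w j * |αhat j - α0 j| with hS_def
  set SJ : ℝ := ∑ j ∈ suppA α0, w j * |αhat j - α0 j| with hSJ_def
  set H : ℝ := enorm2 n (fun i => tfit X Q αhat τhat i - tfit X Q α0 τ0 i) with hH_def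
  set G : ℝ := enorm2 n (fun i => tfit X Q α0 τhat i - tfit X Q α0 τ0 i) with hG_def
  set Ig : ℝ := (n : ℝ)⁻¹ * ∑ i, U i *
      ((∑ l : Fin p, X i l * α0 (Sum.inr l)) * (ind01 Q τhat i - ind01 Q τ0 i)) with hIg_def
  -- the noise bound
  have hnoise : |2 * ∑ j, (αhat j - α0 j) * ip j| ≤ mu * lam * S := by
    have h1 : |2 * ∑ j, (αhat j - α0 j) * ip j|
        = 2 * |∑ j, (αhat j - α0 j) * ip j| := by
      rw [abs_mul, abs_two]
    rw [h1]
    have h2 : |∑ j, (αhat j - α0 j) * ip j| ≤ ∑ j, |αhat j - α0 j| * |ip j| := by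
      refine le_trans (Finset.abs_sum_le_sum_abs _ _) ?_
      exact Finset.sum_le_sum fun j _ => le_of_eq (abs_mul _ _)
    have h3 : ∑ j, |αhat j - α0 j| * |ip j| ≤ ∑ j, |αhat j - α0 j| * (mu * lam / 2 * w j) :=
      Finset.sum_le_sum fun j _ =>
        mul_le_mul_of_nonneg_left (hNC j τhat hτh) (abs_nonneg _)
    have h4 : ∑ j, |αhat j - α0 j| * (mu * lam / 2 * w j) = mu * lam / 2 * S := by
      rw [hS_def, Finset.mul_sum]
      exact Finset.sum_congr rfl fun j _ => by ring
    linarith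
  have hnoise' : 2 * ∑ j, (αhat j - α0 j) * ip j ≤ mu * lam * S :=
    le_trans (le_abs_self _) hnoise
  -- decomposition of the cross term
  have hIh : (n : ℝ)⁻¹ * ∑ i, U i * (tfit X Q αhat τhat i - tfit X Q α0 τ0 i)
      = (∑ j, (αhat j - α0 j) * ip j) + Ig := by
    have hsplit : ∀ i : Fin n, U i * (tfit X Q αhat τhat i - tfit X Q α0 τ0 i)
        = U i * (∑ j, tcol X Q τhat j i * (αhat j - α0 j))
          + U i * ((∑ l : Fin p, X i l * α0 (Sum.inr l)) * (ind01 Q τhat i - ind01 Q τ0 i)) := by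
      intro i
      rw [← mul_add, ← tfit_sub X Q αhat α0 τhat i, ← tfit_tau_diff X Q α0 τhat τ0 i]
      ring_nf
    rw [Finset.sum_congr rfl fun i _ => hsplit i, Finset.sum_add_distrib, mul_add,
      inner_lin U (fun j => tcol X Q τhat j) (fun j => αhat j - α0 j), hIg_def]
  -- penalty comparison
  have hpen : penD X Q α0 τhat + S - penD X Q αhat τhat ≤ 2 * SJ := by
    have := pen_key w hw α0 αhat
    simpa [penD, hS_def, hSJ_def] using this
  have hpenl : lam * penD X Q α0 τhat + lam * S - lam * penD X Q αhat τhat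
      ≤ 2 * lam * SJ := by nlinarith [hpen, hlam.le]
  -- rewrite R_n
  have hR : 2 / (n : ℝ) * ∑ i, U i * (∑ l : Fin p, X i l * α0 (Sum.inr l)) *
      (ind01 Q τhat i - ind01 Q τ0 i) = 2 * Ig := by
    rw [hIg_def, div_eq_mul_inv, mul_assoc,
      Finset.sum_congr rfl fun i (_ : i ∈ Finset.univ) =>
        (mul_assoc (U i) (∑ l : Fin p, X i l * α0 (Sum.inr l)) (ind01 Q τhat i - ind01 Q τ0 i))]
  -- expansions of Sn
  have hSnh : Sn X Q Y αhat τhat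
      = enorm2 n U - 2 * ((∑ j, (αhat j - α0 j) * ip j) + Ig) + H := by
    rw [sn_expand X Q U Y α0 τ0 hdata αhat τhat, hIh]
  have hSn0 : Sn X Q Y α0 τ0 = enorm2 n U := by
    rw [sn_expand X Q U Y α0 τ0 hdata α0 τ0]
    simp [enorm2]
  have hSng : Sn X Q Y α0 τhat = enorm2 n U - 2 * Ig + G := by
    rw [sn_expand X Q U Y α0 τ0 hdata α0 τhat]
    congr 1
    · congr 2
      rw [hIg_def]
      congr 1
      exact Finset.sum_congr rfl fun i _ => by
        rw [tfit_tau_diff X Q α0 τhat τ0 i]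
  constructor
  · -- (i)
    have hm := hmin α0 hα0B τ0 hτ0
    rw [hSnh, hSn0] at hm
    have habs : lam * penD X Q α0 τ0 ≤ lam * penD X Q α0 τhat
        + lam * |penD X Q α0 τhat - penD X Q α0 τ0| := by
      have h5 : penD X Q α0 τ0 - penD X Q α0 τhat ≤ |penD X Q α0 τhat - penD X Q α0 τ0| := by
        rw [abs_sub_comm]; exact le_abs_self _
      nlinarith [hlam.le]
    rw [hR]
    linarith
  · -- (ii)
    have hm := hmin α0 hα0B τhat hτh
    rw [hSnh, hSng] at hm
    linarith



/-- Basic Lasso inequalities for threshold regression (Lemma 1 of the appendix). -/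
theorem stmt5 {n p : ℕ} (X : Fin n → Fin p → ℝ) (Q U Y : Fin n → ℝ)
    (α0 αhat : Fin p ⊕ Fin p → ℝ) (τ0 τhat t0 t1 lam mu C1 : ℝ)
    (hlam : 0 < lam) (hmu0 : 0 < mu) (hmu1 : mu < 1)
    -- the data satisfy the threshold regression equation
    (hdata : ∀ i, Y i = tfit X Q α0 τ0 i + U i)
    -- α0 ∈ B and τ0 ∈ T
    (hα0B : ∀ j, |α0 j| ≤ C1) (hτ0 : τ0 ∈ Set.Icc t0 t1)
    -- (α̂, τ̂) ∈ B × T satisfies the minimizer property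
    (hαhB : ∀ j, |αhat j| ≤ C1) (hτh : τhat ∈ Set.Icc t0 t1)
    (hmin : MinimizerProp X Q Y C1 lam t0 t1 αhat τhat)
    -- the noise condition NC(μ)
    (hNC : NoiseCond X Q U mu lam t0 t1) :
    -- conclusion (i)
    (enorm2 n (fun i => tfit X Q αhat τhat i - tfit X Q α0 τ0 i) +
        (1 - mu) * lam * ∑ j, enormn n (tcol X Q τhat j) * |αhat j - α0 j| ≤
      2 * lam * (∑ j ∈ suppA α0, enormn n (tcol X Q τhat j) * |αhat j - α0 j|) +
        lam * |penD X Q α0 τhat - penD X Q α0 τ0| +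
        2 / (n : ℝ) * ∑ i, U i * (∑ l : Fin p, X i l * α0 (Sum.inr l)) *
          (ind01 Q τhat i - ind01 Q τ0 i)) ∧
    -- conclusion (ii)
    (enorm2 n (fun i => tfit X Q αhat τhat i - tfit X Q α0 τ0 i) +
        (1 - mu) * lam * ∑ j, enormn n (tcol X Q τhat j) * |αhat j - α0 j| ≤
      2 * lam * (∑ j ∈ suppA α0, enormn n (tcol X Q τhat j) * |αhat j - α0 j|) +
        enorm2 n (fun i => tfit X Q α0 τhat i - tfit X Q α0 τ0 i)) := by
  exact stmt5' X Q U Y α0 αhat τ0 τhat t0 t1 lam mu C1 hlam hmu0 hmu1 hdata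
    hα0B hτ0 hαhB hτh hmin hNC

end
end

section
/- Slow-rate prediction error bound for the threshold Lasso (Lemma 1, deterministic form): Fix λ > 0, 0 < μ < 1, ε > 0, C1, C2 > 0 and s0 ∈ ℕ. Suppose: (a) Y_i = X_i'β0 + X_i'δ0·1{Q_i<τ0} + U_i with α0 = (β0',δ0')' ∈ B, |α0|_∞ ≤ C1, M(α0) ≤ s0, and τ0 ∈ T; (b) (α̂,τ̂) ∈ B×T satisfies the minimizer property S_n(α̂,τ̂) + λ|D(τ̂)α̂|_1 ≤ S_n(α,τ) + λ|D(τ)α|_1 for all (α,τ) ∈ B×T; (c) max_{1≤j≤p} ||X^{(j)}||_n² ≤ C2² + ε; and (d) the noise condition NC(μ): |n^{-1} Σ_{i=1}^n U_i X_i^{(j)}(τ)| ≤ (μλ/2)·||X^{(j)}(τ)||_n for every j ∈ {1,…,2p} and τ ∈ T. Then ||f̂ − f0||_n² ≤ (6 + 2μ)·C1·√(C2² + ε)·s0·λ. -/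
open Finset

noncomputable section

variable {n p : ℕ}

lemma enorm2_nonneg (v : Fin n → ℝ) : 0 ≤ enorm2 n v :=
  mul_nonneg (inv_nonneg.2 (Nat.cast_nonneg n)) (Finset.sum_nonneg fun _ _ => sq_nonneg _)

lemma penD_nonneg (X : Fin n → Fin p → ℝ) (Q : Fin n → ℝ) (α : Fin p ⊕ Fin p → ℝ)
    (τ : ℝ) : 0 ≤ penD X Q α τ :=
  Finset.sum_nonneg fun _ _ => mul_nonneg (Real.sqrt_nonneg _) (abs_nonneg _)

lemma enorm2_expand (u d : Fin n → ℝ) :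
    enorm2 n (fun i => u i - d i)
      = enorm2 n u - 2 * ((n:ℝ)⁻¹ * ∑ i, u i * d i) + enorm2 n d := by
  simp only [enorm2]
  have h : ∑ i, (u i - d i)^2 = ∑ i, u i^2 - 2*∑ i, u i * d i + ∑ i, d i ^2 := by
    rw [Finset.mul_sum, ← Finset.sum_sub_distrib, ← Finset.sum_add_distrib]
    exact Finset.sum_congr rfl fun i _ => by ring
  rw [h]; ring

lemma swapU (X : Fin n → Fin p → ℝ) (Q U : Fin n → ℝ) (α : Fin p ⊕ Fin p → ℝ) (τ : ℝ) :
    (n:ℝ)⁻¹ * ∑ i, U i * tfit X Q α τ i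
      = ∑ j, α j * ((n:ℝ)⁻¹ * ∑ i, U i * tcol X Q τ j i) := by
  have h1 : ∑ i, U i * tfit X Q α τ i
      = ∑ j, α j * ∑ i, U i * tcol X Q τ j i := by
    simp only [tfit, Finset.mul_sum]
    rw [Finset.sum_comm]
    exact Finset.sum_congr rfl fun j _ => Finset.sum_congr rfl fun i _ => by ring
  rw [h1, Finset.mul_sum]
  exact Finset.sum_congr rfl fun j _ => by ring

lemma noise_fit_bound (X : Fin n → Fin p → ℝ) (Q U : Fin n → ℝ)
    (mu lam t0 t1 : ℝ) (hNC : NoiseCond X Q U mu lam t0 t1)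
    (α : Fin p ⊕ Fin p → ℝ) (τ : ℝ) (hτ : τ ∈ Set.Icc t0 t1) :
    |(n:ℝ)⁻¹ * ∑ i, U i * tfit X Q α τ i| ≤ mu * lam / 2 * penD X Q α τ := by
  rw [swapU]
  calc |∑ j, α j * ((n:ℝ)⁻¹ * ∑ i, U i * tcol X Q τ j i)|
      ≤ ∑ j, |α j * ((n:ℝ)⁻¹ * ∑ i, U i * tcol X Q τ j i)| :=
        Finset.abs_sum_le_sum_abs _ _
    _ ≤ ∑ j, mu * lam / 2 * (enormn n (tcol X Q τ j) * |α j|) := by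
        refine Finset.sum_le_sum fun j _ => ?_
        rw [abs_mul]
        calc |α j| * |(n:ℝ)⁻¹ * ∑ i, U i * tcol X Q τ j i|
            ≤ |α j| * (mu * lam / 2 * enormn n (tcol X Q τ j)) :=
              mul_le_mul_of_nonneg_left (hNC j τ hτ) (abs_nonneg _)
          _ = mu * lam / 2 * (enormn n (tcol X Q τ j) * |α j|) := by ring
    _ = mu * lam / 2 * penD X Q α τ := by rw [penD, Finset.mul_sum]

lemma tcol_enormn_bound (X : Fin n → Fin p → ℝ) (Q : Fin n → ℝ) (τ C : ℝ)
    (hC : 0 ≤ C) (hcol : ∀ l : Fin p, enorm2 n (fun i => X i l) ≤ C)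
    (j : Fin p ⊕ Fin p) : enormn n (tcol X Q τ j) ≤ Real.sqrt C := by
  apply Real.sqrt_le_sqrt
  cases j with
  | inl l => exact hcol l
  | inr l =>
    refine le_trans ?_ (hcol l)
    apply mul_le_mul_of_nonneg_left ?_ (inv_nonneg.2 (Nat.cast_nonneg n))
    refine Finset.sum_le_sum fun i _ => ?_
    simp only [tcol, Sum.elim_inr]
    split
    · exact le_refl _
    · simpa using sq_nonneg (X i l)

/-- Slow-rate prediction error bound for the threshold Lasso (Lemma 1, deterministic form). -/
theorem stmt6 {n p : ℕ} (X : Fin n → Fin p → ℝ) (Q U Y : Fin n → ℝ)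
    (α0 αhat : Fin p ⊕ Fin p → ℝ) (τ0 τhat t0 t1 lam mu ε C1 C2 : ℝ) (s0 : ℕ)
    (hlam : 0 < lam) (hmu0 : 0 < mu) (hmu1 : mu < 1) (hε : 0 < ε)
    (hC1 : 0 < C1) (hC2 : 0 < C2)
    -- (a) the data equation, with α0 ∈ B sparse and τ0 ∈ T
    (hdata : ∀ i, Y i = tfit X Q α0 τ0 i + U i)
    (hα0B : ∀ j, |α0 j| ≤ C1) (hsupp : (suppA α0).card ≤ s0) (hτ0 : τ0 ∈ Set.Icc t0 t1)
    -- (b) (α̂, τ̂) ∈ B × T satisfies the minimizer property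
    (hαhB : ∀ j, |αhat j| ≤ C1) (hτh : τhat ∈ Set.Icc t0 t1)
    (hmin : MinimizerProp X Q Y C1 lam t0 t1 αhat τhat)
    -- (c) bound on the plain design columns
    (hcol : ∀ j : Fin p, enorm2 n (fun i => X i j) ≤ C2 ^ 2 + ε)
    -- (d) the noise condition NC(μ)
    (hNC : NoiseCond X Q U mu lam t0 t1) :
    enorm2 n (fun i => tfit X Q αhat τhat i - tfit X Q α0 τ0 i) ≤
      (6 + 2 * mu) * C1 * Real.sqrt (C2 ^ 2 + ε) * s0 * lam := by
  set A := fun i => tfit X Q αhat τhat i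
  set B := fun i => tfit X Q α0 τ0 i
  set P0 := penD X Q α0 τ0 with hP0def
  set Ph := penD X Q αhat τhat with hPhdef
  have hP0nn : 0 ≤ P0 := penD_nonneg _ _ _ _
  have hPhnn : 0 ≤ Ph := penD_nonneg _ _ _ _
  have hsq := Real.sqrt_nonneg (C2 ^ 2 + ε)
  have hs0 : (0:ℝ) ≤ s0 := Nat.cast_nonneg s0
  -- rewrite the two Sn values
  have hS0 : Sn X Q Y α0 τ0 = enorm2 n U := by
    simp only [Sn]
    congr 1
    funext i
    rw [hdata i]; ring
  have hSh : Sn X Q Y αhat τhat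
      = enorm2 n U - 2 * ((n:ℝ)⁻¹ * ∑ i, U i * (A i - B i))
        + enorm2 n (fun i => A i - B i) := by
    have : Sn X Q Y αhat τhat = enorm2 n (fun i => U i - (A i - B i)) := by
      simp only [Sn]
      congr 1
      funext i
      rw [hdata i]; simp only [A, B]; ring
    rw [this, enorm2_expand]
  have key := hmin α0 hα0B τ0 hτ0
  have step2 : enorm2 n (fun i => A i - B i)
      ≤ 2 * ((n:ℝ)⁻¹ * ∑ i, U i * (A i - B i)) + lam * P0 - lam * Ph := by
    rw [hS0, hSh] at key; linarith
  -- split the noise term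
  have hsplit : (n:ℝ)⁻¹ * ∑ i, U i * (A i - B i)
      = (n:ℝ)⁻¹ * ∑ i, U i * A i - (n:ℝ)⁻¹ * ∑ i, U i * B i := by
    rw [← mul_sub, ← Finset.sum_sub_distrib]
    congr 1
    exact Finset.sum_congr rfl fun i _ => by ring
  have hAbd := noise_fit_bound X Q U mu lam t0 t1 hNC αhat τhat hτh
  have hBbd := noise_fit_bound X Q U mu lam t0 t1 hNC α0 τ0 hτ0
  have hAle := (abs_le.1 hAbd).2
  have hBle := (abs_le.1 hBbd).1
  have step3 : enorm2 n (fun i => A i - B i)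
      ≤ mu * lam * Ph + mu * lam * P0 + lam * P0 - lam * Ph := by
    rw [hsplit] at step2
    have hAle' : (n:ℝ)⁻¹ * ∑ i, U i * A i ≤ mu * lam / 2 * Ph := hAle
    have hBle' : -(mu * lam / 2 * P0) ≤ (n:ℝ)⁻¹ * ∑ i, U i * B i := hBle
    linarith
  have step4 : enorm2 n (fun i => A i - B i) ≤ (1 + mu) * lam * P0 := by
    nlinarith [mul_nonneg hlam.le hPhnn]
  -- bound P0
  have hcb : ∀ j : Fin p ⊕ Fin p,
      enormn n (tcol X Q τ0 j) ≤ Real.sqrt (C2 ^ 2 + ε) :=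
    tcol_enormn_bound X Q τ0 (C2 ^ 2 + ε) (by positivity) hcol
  have hP0b : P0 ≤ C1 * Real.sqrt (C2 ^ 2 + ε) * s0 := by
    have heq : P0 = ∑ j ∈ suppA α0, enormn n (tcol X Q τ0 j) * |α0 j| := by
      rw [hP0def, penD]
      refine (Finset.sum_subset (Finset.subset_univ _) fun j _ hj => ?_).symm
      have : α0 j = 0 := by
        by_contra h
        exact hj (Finset.mem_filter.2 ⟨Finset.mem_univ j, h⟩)
      rw [this]; simp
    rw [heq]
    calc ∑ j ∈ suppA α0, enormn n (tcol X Q τ0 j) * |α0 j|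
        ≤ ∑ j ∈ suppA α0, Real.sqrt (C2 ^ 2 + ε) * C1 := by
          refine Finset.sum_le_sum fun j _ => ?_
          exact mul_le_mul (hcb j) (hα0B j) (abs_nonneg _) hsq
      _ = (suppA α0).card * (Real.sqrt (C2 ^ 2 + ε) * C1) := by
          rw [Finset.sum_const, nsmul_eq_mul]
      _ ≤ C1 * Real.sqrt (C2 ^ 2 + ε) * s0 := by
          have h2 : ((suppA α0).card : ℝ) ≤ s0 := Nat.cast_le.2 hsupp
          calc ((suppA α0).card : ℝ) * (Real.sqrt (C2 ^ 2 + ε) * C1)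
              ≤ (s0 : ℝ) * (Real.sqrt (C2 ^ 2 + ε) * C1) :=
                mul_le_mul_of_nonneg_right h2 (mul_nonneg hsq hC1.le)
            _ = C1 * Real.sqrt (C2 ^ 2 + ε) * s0 := by ring
  have step5 : (1 + mu) * lam * P0
      ≤ (1 + mu) * lam * (C1 * Real.sqrt (C2 ^ 2 + ε) * s0) := by
    apply mul_le_mul_of_nonneg_left hP0b (by nlinarith)
  have hq : 0 ≤ C1 * Real.sqrt (C2 ^ 2 + ε) * s0 * lam := by positivity
  calc enorm2 n (fun i => A i - B i) ≤ (1 + mu) * lam * P0 := step4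
    _ ≤ (1 + mu) * lam * (C1 * Real.sqrt (C2 ^ 2 + ε) * s0) := step5
    _ ≤ (6 + 2 * mu) * C1 * Real.sqrt (C2 ^ 2 + ε) * s0 * lam := by nlinarith


end
end

section
/- Transfer of the restricted eigenvalue condition from population to sample (key inequality in Lemma A.7): Let T be any index set, and for each τ ∈ T let Σ̂(τ) and Σ(τ) be symmetric 2p×2p real matrices. Fix an integer s0 ≥ 1 and c0 > 0, and define κ(s0,c0,T,Σ)² := inf over τ ∈ T, over J0 ⊆ {1,…,2p} with |J0| ≤ s0, and over γ ∈ ℝ^{2p}, γ ≠ 0, with |γ_{J0^c}|_1 ≤ c0·|γ_{J0}|_1, of γ'Σ(τ)γ / |γ_{J0}|_2². Then for every τ ∈ T, every J0 ⊆ {1,…,2p} with |J0| ≤ s0, and every γ ≠ 0 with |γ_{J0^c}|_1 ≤ c0·|γ_{J0}|_1: γ'Σ̂(τ)γ / |γ_{J0}|_2² ≥ κ(s0,c0,T,Σ)² − (1+c0)²·s0·sup_{τ'∈T} ||Σ̂(τ') − Σ(τ')||_∞. -/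
open Finset Matrix

/-- Transfer of the restricted eigenvalue condition from population to sample
(key inequality in Lemma A.7).  `κ2` plays the role of
`κ(s0,c0,T,Σ)²`, formalized as a lower bound of the population restricted-eigenvalue
ratios, and `s` plays the role of `sup_{τ'∈T} ‖Σ̂(τ') − Σ(τ')‖_∞`, formalized as an
upper bound of the entrywise deviations. -/
theorem stmt8 {p : ℕ} (T : Set ℝ)
    (Shat Spop : ℝ → Matrix (Fin (2 * p)) (Fin (2 * p)) ℝ)
    (hsymm : ∀ τ ∈ T, (Shat τ).IsSymm ∧ (Spop τ).IsSymm)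
    (s0 : ℕ) (hs0 : 1 ≤ s0) (c0 : ℝ) (hc0 : 0 < c0)
    (κ2 : ℝ)
    -- κ2 is (a lower bound for) the population restricted eigenvalue constant
    (hκ2 : ∀ τ ∈ T, ∀ J0 : Finset (Fin (2 * p)), J0.card ≤ s0 →
      ∀ γ : Fin (2 * p) → ℝ, γ ≠ 0 →
        (∑ j ∈ J0ᶜ, |γ j|) ≤ c0 * ∑ j ∈ J0, |γ j| →
        κ2 ≤ (γ ⬝ᵥ (Spop τ) *ᵥ γ) / ∑ j ∈ J0, γ j ^ 2)
    (s : ℝ)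
    -- s is (an upper bound for) the uniform entrywise deviation of Σ̂ from Σ
    (hs : ∀ τ' ∈ T, ∀ j l, |Shat τ' j l - Spop τ' j l| ≤ s) :
    ∀ τ ∈ T, ∀ J0 : Finset (Fin (2 * p)), J0.card ≤ s0 →
      ∀ γ : Fin (2 * p) → ℝ, γ ≠ 0 →
        (∑ j ∈ J0ᶜ, |γ j|) ≤ c0 * ∑ j ∈ J0, |γ j| →
        κ2 - (1 + c0) ^ 2 * s0 * s ≤ (γ ⬝ᵥ (Shat τ) *ᵥ γ) / ∑ j ∈ J0, γ j ^ 2 := by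

  intro τ hτ J0 hJ0 γ hγ hcone
  rcases Nat.eq_zero_or_pos p with hp | hp
  · subst hp
    exact absurd (funext fun j => absurd j.isLt (by omega)) hγ
  haveI : NeZero (2 * p) := ⟨by omega⟩
  set Q : ℝ := ∑ j ∈ J0, γ j ^ 2 with hQ
  have hQ0 : 0 ≤ Q := Finset.sum_nonneg fun j _ => sq_nonneg _
  have hQpos : 0 < Q := by
    rcases hQ0.lt_or_eq with h | h
    · exact h
    exfalso
    have hz : ∀ j ∈ J0, γ j = 0 := by
      intro j hj
      have := (Finset.sum_eq_zero_iff_of_nonneg (fun j _ => sq_nonneg (γ j))).mp h.symm j hj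
      exact pow_eq_zero_iff (by norm_num) |>.mp this
    have hL0 : (∑ j ∈ J0, |γ j|) = 0 := Finset.sum_eq_zero fun j hj => by
      rw [hz j hj, abs_zero]
    have hcz : (∑ j ∈ J0ᶜ, |γ j|) = 0 := le_antisymm (by
        calc (∑ j ∈ J0ᶜ, |γ j|) ≤ c0 * ∑ j ∈ J0, |γ j| := hcone
        _ = 0 := by rw [hL0, mul_zero])
      (Finset.sum_nonneg fun j _ => abs_nonneg _)
    have hzc : ∀ j ∈ J0ᶜ, γ j = 0 := by
      intro j hj
      have := (Finset.sum_eq_zero_iff_of_nonneg (fun j _ => abs_nonneg (γ j))).mp hcz j hj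
      exact abs_eq_zero.mp this
    apply hγ
    funext j
    by_cases hj : j ∈ J0
    · exact hz j hj
    · exact hzc j (Finset.mem_compl.mpr hj)
  have hsnn : 0 ≤ s := le_trans (abs_nonneg _) (hs τ hτ 0 0)
  set L : ℝ := ∑ j ∈ J0, |γ j| with hLdef
  set A : ℝ := ∑ j, |γ j| with hAdef
  have hLnn : 0 ≤ L := Finset.sum_nonneg fun j _ => abs_nonneg _
  have hAle : A ≤ (1 + c0) * L := by
    have : A = L + ∑ j ∈ J0ᶜ, |γ j| := (Finset.sum_add_sum_compl J0 _).symm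
    rw [this]; linarith
  have hC : L ^ 2 ≤ (s0 : ℝ) * Q := by
    calc L ^ 2 ≤ (J0.card : ℝ) * Q := by
          have h1 : L ^ 2 ≤ (J0.card : ℝ) * ∑ j ∈ J0, |γ j| ^ 2 := by
            exact_mod_cast sq_sum_le_card_mul_sum_sq (s := J0) (f := fun j => |γ j|)
          simpa [sq_abs, hQ] using h1
      _ ≤ (s0 : ℝ) * Q := by
          apply mul_le_mul_of_nonneg_right _ hQ0
          exact_mod_cast hJ0
  have hform : ∀ M : Matrix (Fin (2 * p)) (Fin (2 * p)) ℝ,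
      γ ⬝ᵥ M *ᵥ γ = ∑ i, ∑ j, γ i * M i j * γ j := by
    intro M
    simp [dotProduct, mulVec, Finset.mul_sum, mul_assoc, mul_comm, mul_left_comm]
  have hdiff : |γ ⬝ᵥ (Shat τ) *ᵥ γ - γ ⬝ᵥ (Spop τ) *ᵥ γ| ≤ s * A ^ 2 := by
    have heq : γ ⬝ᵥ (Shat τ) *ᵥ γ - γ ⬝ᵥ (Spop τ) *ᵥ γ
        = ∑ i, ∑ j, γ i * (Shat τ i j - Spop τ i j) * γ j := by
      rw [hform, hform, ← Finset.sum_sub_distrib]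
      congr 1; ext i
      rw [← Finset.sum_sub_distrib]
      congr 1; ext j; ring
    rw [heq]
    calc |∑ i, ∑ j, γ i * (Shat τ i j - Spop τ i j) * γ j|
        ≤ ∑ i, |∑ j, γ i * (Shat τ i j - Spop τ i j) * γ j| :=
          Finset.abs_sum_le_sum_abs _ _
      _ ≤ ∑ i, ∑ j, |γ i * (Shat τ i j - Spop τ i j) * γ j| :=
          Finset.sum_le_sum fun i _ => Finset.abs_sum_le_sum_abs _ _
      _ ≤ ∑ i, ∑ j, |γ i| * s * |γ j| := by
          apply Finset.sum_le_sum; intro i _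
          apply Finset.sum_le_sum; intro j _
          rw [abs_mul, abs_mul]
          apply mul_le_mul_of_nonneg_right _ (abs_nonneg _)
          exact mul_le_mul_of_nonneg_left (hs τ hτ i j) (abs_nonneg _)
      _ = s * A ^ 2 := by
          rw [sq, hAdef, Finset.sum_mul_sum, Finset.mul_sum]
          congr 1; ext i
          rw [Finset.mul_sum]
          congr 1; ext j; ring
  have hpop : κ2 * Q ≤ γ ⬝ᵥ (Spop τ) *ᵥ γ :=
    (le_div_iff₀ hQpos).mp (hκ2 τ hτ J0 hJ0 γ hγ hcone)
  rw [le_div_iff₀ hQpos]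
  have hA2 : A ^ 2 ≤ (1 + c0) ^ 2 * L ^ 2 := by nlinarith [Finset.sum_nonneg (fun j (_ : j ∈ Finset.univ) => abs_nonneg (γ j))]
  have habs := abs_le.mp hdiff
  nlinarith [mul_le_mul_of_nonneg_left hA2 hsnn, mul_le_mul_of_nonneg_left hC (mul_nonneg hsnn (sq_nonneg (1+c0)))]
end

section
/- Block structure and bound for the threshold-misspecification term (core of Lemma A.16): Let X ∈ ℝ^{n×p}, Q ∈ ℝ^n, and for τ ∈ ℝ let X(τ) ∈ ℝ^{n×2p} have i-th row (X_i', X_i'·1{Q_i<τ}); define M̂ := n^{-1}Σ_i X_iX_i' and M̂(τ) := n^{-1}Σ_i X_iX_i'·1{Q_i<τ}. Then for all τ, τ0 ∈ ℝ: (i) n^{-1}·( X(τ)'X(τ0) − X(τ)'X(τ) ) equals the 2p×2p block matrix [[0, M̂(τ0) − M̂(τ)], [0, M̂(min{τ0,τ}) − M̂(τ)]]; and (ii) for any α0 = (β0', δ0')' ∈ ℝ^{2p}, any Θ̂ ∈ ℝ^{2p×2p}, and any g ∈ ℝ^{2p} with |g|_2 ≤ 1 supported on a set H of cardinality h: | g'Θ̂·(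 X(τ)'X(τ0) − X(τ)'X(τ) )·α0/√n | ≤ √n · √h · max_{j∈H} |Θ̂_j|_1 · ||M̂(τ0) − M̂(τ)||_∞ · |δ0|_1, where Θ̂_j is the j-th row of Θ̂. -/
open Matrix Finset

/-- Block structure and bound for the threshold-misspecification term
(core of Lemma A.16).  In part (ii), `m1` plays the role of `max_{j∈H} |Θ̂_j|₁` and
`m2` the role of `‖M̂(τ0) − M̂(τ)‖_∞`, formalized as upper bounds. -/
theorem stmt18 (n p : ℕ) (X : Matrix (Fin n) (Fin p) ℝ) (Q : Fin n → ℝ)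
    (Xdes : ℝ → Matrix (Fin n) (Fin p ⊕ Fin p) ℝ)
    (hXdes : ∀ t : ℝ, Xdes t = Matrix.of fun i j =>
      Sum.elim (fun l => X i l) (fun l => if Q i < t then X i l else 0) j)
    (Mhat : ℝ → Matrix (Fin p) (Fin p) ℝ)
    (hMhat : ∀ t : ℝ, Mhat t = Matrix.of fun j l =>
      (n : ℝ)⁻¹ * ∑ i, X i j * X i l * (if Q i < t then 1 else 0))
    (τ τ0 : ℝ) :
    -- (i) the block identity
    ((n : ℝ)⁻¹ • ((Xdes τ).transpose * Xdes τ0 - (Xdes τ).transpose * Xdes τ) =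
      Matrix.fromBlocks 0 (Mhat τ0 - Mhat τ) 0 (Mhat (min τ0 τ) - Mhat τ)) ∧
    -- (ii) the bound
    (∀ (α0 : Fin p ⊕ Fin p → ℝ) (Θhat : Matrix (Fin p ⊕ Fin p) (Fin p ⊕ Fin p) ℝ)
       (g : Fin p ⊕ Fin p → ℝ) (H : Finset (Fin p ⊕ Fin p)),
      Real.sqrt (∑ j, g j ^ 2) ≤ 1 → (∀ j ∉ H, g j = 0) →
      ∀ m1 m2 : ℝ, 0 ≤ m1 → 0 ≤ m2 →
        (∀ j ∈ H, (∑ l, |Θhat j l|) ≤ m1) →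
        (∀ j l : Fin p, |Mhat τ0 j l - Mhat τ j l| ≤ m2) →
        |(g ⬝ᵥ (Θhat *ᵥ
            (((Xdes τ).transpose * Xdes τ0 - (Xdes τ).transpose * Xdes τ) *ᵥ α0))) /
            Real.sqrt n| ≤
          Real.sqrt n * Real.sqrt H.card * m1 * m2 * ∑ l : Fin p, |α0 (Sum.inr l)|) := by

  have hi : ((n : ℝ)⁻¹ • ((Xdes τ).transpose * Xdes τ0 - (Xdes τ).transpose * Xdes τ) =
      Matrix.fromBlocks 0 (Mhat τ0 - Mhat τ) 0 (Mhat (min τ0 τ) - Mhat τ)) := by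
    ext j k
    rcases j with j | j <;> rcases k with k | k <;>
      simp [hXdes, hMhat, Matrix.mul_apply, Matrix.sub_apply, Matrix.smul_apply,
        mul_ite, ite_mul, mul_zero, zero_mul, mul_one, lt_min_iff, ite_and,
        mul_sub, Finset.mul_sum] <;>
      exact Finset.sum_congr rfl fun i _ => by split_ifs <;> rfl
  refine ⟨hi, ?_⟩
  intro α0 Θhat g H hg2 hgsupp m1 m2 hm1 hm2 hΘ hM
  set D := (Xdes τ).transpose * Xdes τ0 - (Xdes τ).transpose * Xdes τ with hD
  set S := ∑ l : Fin p, |α0 (Sum.inr l)| with hS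
  have hS0 : 0 ≤ S := Finset.sum_nonneg fun _ _ => abs_nonneg _
  have hM' : ∀ j l : Fin p, |Mhat (min τ0 τ) j l - Mhat τ j l| ≤ m2 := by
    intro j l
    rcases le_total τ τ0 with h | h
    · rw [min_eq_right h]; simpa using hm2
    · rw [min_eq_left h]; exact hM j l
  have hDn : D = (n : ℝ) • Matrix.fromBlocks 0 (Mhat τ0 - Mhat τ) 0
      (Mhat (min τ0 τ) - Mhat τ) := by
    rcases Nat.eq_zero_or_pos n with hn | hn
    · subst hn
      have hM0 : ∀ t : ℝ, Mhat t = 0 := by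
        intro t; rw [hMhat t]; ext a b; simp
      ext j k
      rcases j with j | j <;> rcases k with k | k <;>
        simp [hD, hXdes, Matrix.mul_apply, Matrix.sub_apply, hM0]
    · have hn' : (n : ℝ) ≠ 0 := Nat.cast_ne_zero.2 hn.ne'
      rw [← hi, smul_smul, mul_inv_cancel₀ hn', one_smul]
  have bnd : ∀ (A : Matrix (Fin p) (Fin p) ℝ) (j : Fin p), (∀ a b, |A a b| ≤ m2) →
      |∑ l : Fin p, A j l * α0 (Sum.inr l)| ≤ m2 * S := by
    intro A j hA
    refine le_trans (Finset.abs_sum_le_sum_abs _ _) ?_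
    rw [hS, Finset.mul_sum]
    refine Finset.sum_le_sum fun l _ => ?_
    rw [abs_mul]
    exact mul_le_mul_of_nonneg_right (hA j l) (abs_nonneg _)
  have hv : ∀ j, |(D *ᵥ α0) j| ≤ (n : ℝ) * (m2 * S) := by
    intro j
    rw [hDn, Matrix.smul_mulVec, Pi.smul_apply, smul_eq_mul, abs_mul,
      Nat.abs_cast]
    refine mul_le_mul_of_nonneg_left ?_ (Nat.cast_nonneg n)
    rcases j with j | j
    · have h1 : (Matrix.fromBlocks 0 (Mhat τ0 - Mhat τ) 0 (Mhat (min τ0 τ) - Mhat τ)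
          *ᵥ α0) (Sum.inl j) = ∑ l : Fin p, (Mhat τ0 - Mhat τ) j l * α0 (Sum.inr l) := by
        simp [Matrix.mulVec, dotProduct, Fintype.sum_sum_type]
      rw [h1]
      exact bnd _ j fun a b => by simpa [Matrix.sub_apply] using hM a b
    · have h1 : (Matrix.fromBlocks 0 (Mhat τ0 - Mhat τ) 0 (Mhat (min τ0 τ) - Mhat τ)
          *ᵥ α0) (Sum.inr j) =
          ∑ l : Fin p, (Mhat (min τ0 τ) - Mhat τ) j l * α0 (Sum.inr l) := by
        simp [Matrix.mulVec, dotProduct, Fintype.sum_sum_type]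
      rw [h1]
      exact bnd _ j fun a b => by simpa [Matrix.sub_apply] using hM' a b
  have hw : ∀ j ∈ H, |(Θhat *ᵥ (D *ᵥ α0)) j| ≤ m1 * ((n : ℝ) * (m2 * S)) := by
    intro j hj
    rw [Matrix.mulVec, dotProduct]
    refine le_trans (Finset.abs_sum_le_sum_abs _ _) ?_
    have : ∑ k, |Θhat j k * (D *ᵥ α0) k| ≤ ∑ k, |Θhat j k| * ((n : ℝ) * (m2 * S)) := by
      refine Finset.sum_le_sum fun k _ => ?_
      rw [abs_mul]
      exact mul_le_mul_of_nonneg_left (hv k) (abs_nonneg _)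
    refine le_trans this ?_
    rw [← Finset.sum_mul]
    exact mul_le_mul_of_nonneg_right (hΘ j hj)
      (by positivity)
  have hgsum : ∑ j ∈ H, |g j| ≤ Real.sqrt H.card := by
    have h1 : (∑ j ∈ H, |g j|) ^ 2 ≤ (H.card : ℝ) * ∑ j ∈ H, |g j| ^ 2 :=
      sq_sum_le_card_mul_sum_sq
    have h2 : ∑ j ∈ H, |g j| ^ 2 ≤ 1 := by
      have h3 : ∑ j ∈ H, |g j| ^ 2 ≤ ∑ j, g j ^ 2 := by
        refine le_trans (le_of_eq (Finset.sum_congr rfl fun j _ => sq_abs (g j)))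
          (Finset.sum_le_sum_of_subset_of_nonneg H.subset_univ fun j _ _ => sq_nonneg _)
      have h4 : ∑ j, g j ^ 2 ≤ 1 := by
        have h7 : (0:ℝ) ≤ ∑ j, g j ^ 2 := Finset.sum_nonneg fun j _ => sq_nonneg (g j)
        have h8 := Real.sq_sqrt h7
        nlinarith [Real.sqrt_nonneg (∑ j, g j ^ 2)]
      linarith
    have h5 : (∑ j ∈ H, |g j|) ^ 2 ≤ (H.card : ℝ) := by
      calc (∑ j ∈ H, |g j|) ^ 2 ≤ (H.card : ℝ) * ∑ j ∈ H, |g j| ^ 2 := h1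
        _ ≤ (H.card : ℝ) * 1 := by
            exact mul_le_mul_of_nonneg_left h2 (Nat.cast_nonneg _)
        _ = (H.card : ℝ) := mul_one _
    have h6 : 0 ≤ ∑ j ∈ H, |g j| := Finset.sum_nonneg fun _ _ => abs_nonneg _
    calc ∑ j ∈ H, |g j| = Real.sqrt ((∑ j ∈ H, |g j|) ^ 2) := (Real.sqrt_sq h6).symm
      _ ≤ Real.sqrt H.card := Real.sqrt_le_sqrt h5
  have hnum : |g ⬝ᵥ Θhat *ᵥ (D *ᵥ α0)| ≤
      Real.sqrt H.card * (m1 * ((n : ℝ) * (m2 * S))) := by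
    have hres : g ⬝ᵥ Θhat *ᵥ (D *ᵥ α0) = ∑ j ∈ H, g j * (Θhat *ᵥ (D *ᵥ α0)) j := by
      rw [dotProduct]
      exact (Finset.sum_subset H.subset_univ fun j _ hj => by
        rw [hgsupp j hj, zero_mul]).symm
    rw [hres]
    refine le_trans (Finset.abs_sum_le_sum_abs _ _) ?_
    have : ∑ j ∈ H, |g j * (Θhat *ᵥ (D *ᵥ α0)) j| ≤
        ∑ j ∈ H, |g j| * (m1 * ((n : ℝ) * (m2 * S))) := by
      refine Finset.sum_le_sum fun j hj => ?_
      rw [abs_mul]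
      exact mul_le_mul_of_nonneg_left (hw j hj) (abs_nonneg _)
    refine le_trans this ?_
    rw [← Finset.sum_mul]
    exact mul_le_mul_of_nonneg_right hgsum (by positivity)
  rcases Nat.eq_zero_or_pos n with hn | hn
  · have h0 : |g ⬝ᵥ Θhat *ᵥ (D *ᵥ α0)| ≤ 0 := by
      refine le_trans hnum ?_
      simp [hn]
    have h0' : g ⬝ᵥ Θhat *ᵥ (D *ᵥ α0) = 0 := abs_eq_zero.1 (le_antisymm h0 (abs_nonneg _))
    rw [h0', zero_div, abs_zero]
    positivity
  · have hsn : (0 : ℝ) < Real.sqrt n := Real.sqrt_pos.2 (by exact_mod_cast hn)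
    rw [abs_div, abs_of_pos hsn, div_le_iff₀ hsn]
    refine le_trans hnum (le_of_eq ?_)
    have hnn : Real.sqrt n * Real.sqrt n = (n : ℝ) :=
      Real.mul_self_sqrt (Nat.cast_nonneg n)
    conv_lhs => rw [← hnn]
    ring
end
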